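/- arXiv:1204.6052 — 2 statements merged into one kernel-verified Lean document; each statement's English description precedes it below -/
import Mathlib

section
/- Let H be a finite-dimensional complex Hilbert space and let a be a Hermitian operator on H such that for every rank-one orthogonal projection q with Tr(a q) = 0 and every Hermitian traceless h on H, one has Tr(a · i[q,h]) = 0. Then for all rank-one orthogonal projections p₁, p₂ on H, Tr(a p₁) · Tr(a p₂) ≥ 0; equivalently, a is either positive semidefinite or negative semidefinite. -/
open Matrix
open scoped ComplexOrder

namespace EWitness

/-- The rank one projector `|v⟩⟨v|`. -/
def proj {m : Type*} (v : m → ℂ) : Matrix m m ℂ := Matrix.vecMulVec v (star v)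

/-- The trace inner product `(a,b) = Tr(a† b)` (its real part; on the real vector space of
Hermitian operators this is exactly the trace inner product, which is real-valued there). -/
noncomputable def tinner {m : Type*} [Fintype m] (a b : Matrix m m ℂ) : ℝ :=
  ((aᴴ * b).trace).re

end EWitness

/-!
The tangent condition at `q = |u⟩⟨u|` says `Re Tr(i[a,q] h) = 0` for every traceless Hermitian
`h`. Since `i[a,q]` is itself traceless and Hermitian, the choice `h = i[a,q]` gives
`Tr(i[a,q]ᴴ i[a,q]) = 0`, so `a` commutes with `q` and `a u = ⟨u, a u⟩ u`. Hence every isotropic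
vector of the form `x ↦ ⟨x, a x⟩` lies in the kernel of `a`.

If the form took values `α > 0` at `x` and `β < 0` at `y`, the real quadratic
`s ↦ ⟨x + s y, a (x + s y)⟩` would have a root `s`. Then `a (x + s y) = 0`, and pairing this with
`x` and with `y` gives `α = s² β ≤ 0`.
-/

namespace Matrix

lemma trace_mul_commutator {m R : Type*} [Fintype m] [CommRing R] (a q h : Matrix m m R) :
    (a * (q * h - h * q)).trace = ((a * q - q * a) * h).trace := by
  rw [Matrix.mul_sub, Matrix.sub_mul, trace_sub, trace_sub, Matrix.mul_assoc,
    ← Matrix.mul_assoc a h q, trace_mul_cycle a h q]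

variable {𝕜 m : Type*} [RCLike 𝕜] [Fintype m] {a : Matrix m m 𝕜}

open RCLike

lemma exists_smul_dotProduct_star_self_eq_one {x : m → 𝕜} (hx : x ≠ 0) :
    ∃ c : 𝕜, c ≠ 0 ∧ star (c • x) ⬝ᵥ (c • x) = 1 := by
  obtain ⟨r, hr, hrx⟩ := pos_iff_exists_ofReal.mp (dotProduct_star_self_pos_iff.mpr hx)
  refine ⟨((√r)⁻¹ : ℝ), by simpa using (Real.sqrt_pos.mpr hr).ne', ?_⟩
  rw [star_smul, smul_dotProduct, dotProduct_smul, ← hrx]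
  simp only [smul_eq_mul, star_def, conj_ofReal]
  norm_cast
  field_simp
  exact (Real.sq_sqrt hr.le).symm

lemma IsHermitian.re_dotProduct_mulVec_comm (ha : a.IsHermitian) (x y : m → 𝕜) :
    re (star y ⬝ᵥ a *ᵥ x) = re (star x ⬝ᵥ a *ᵥ y) := by
  rw [← conj_re, ← star_def, ← star_dotProduct_star, star_star, star_mulVec,
    ← dotProduct_mulVec, ha.eq]

lemma re_dotProduct_mulVec_add_smul (x y : m → 𝕜) (s : ℝ) :
    re (star (x + (s : 𝕜) • y) ⬝ᵥ a *ᵥ (x + (s : 𝕜) • y)) =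
      re (star x ⬝ᵥ a *ᵥ x) + s * (re (star x ⬝ᵥ a *ᵥ y) + re (star y ⬝ᵥ a *ᵥ x)) +
        s ^ 2 * re (star y ⬝ᵥ a *ᵥ y) := by
  simp only [algebraMap_smul, star_add, star_smul, star_trivial, mulVec_add, mulVec_smul,
    dotProduct_add, add_dotProduct, smul_dotProduct, dotProduct_smul, smul_add, map_add, smul_re]
  ring

lemma IsHermitian.re_dotProduct_mulVec_nonneg_of_pos (ha : a.IsHermitian)
    (hker : ∀ z, star z ⬝ᵥ a *ᵥ z = 0 → a *ᵥ z = 0) {x : m → 𝕜}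
    (hx : 0 < re (star x ⬝ᵥ a *ᵥ x)) (y : m → 𝕜) : 0 ≤ re (star y ⬝ᵥ a *ᵥ y) := by
  by_contra! hy
  set α := re (star x ⬝ᵥ a *ᵥ x)
  set β := re (star y ⬝ᵥ a *ᵥ y)
  set b := re (star x ⬝ᵥ a *ᵥ y)
  have hdiscrim : 0 < discrim β (2 * b) α := by
    rw [discrim]; nlinarith [sq_nonneg b]
  obtain ⟨s, hs⟩ := exists_quadratic_eq_zero hy.ne
    ⟨√(discrim β (2 * b) α), (Real.mul_self_sqrt hdiscrim.le).symm⟩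
  set z := x + (s : 𝕜) • y
  have hz : star z ⬝ᵥ a *ᵥ z = 0 := by
    rw [← conj_eq_iff_re.mp (conj_eq_iff_im.mpr (ha.im_star_dotProduct_mulVec_self z)),
      re_dotProduct_mulVec_add_smul, ha.re_dotProduct_mulVec_comm x y]
    exact_mod_cast (by linear_combination hs)
  have haz := hker z hz
  have hxz : α + s * b = 0 := by
    simpa [z, mulVec_add, mulVec_smul, smul_re] using congr_arg (fun w => re (star x ⬝ᵥ w)) haz
  have hyz : b + s * β = 0 := by
    simpa [z, mulVec_add, mulVec_smul, smul_re, ha.re_dotProduct_mulVec_comm x y]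
      using congr_arg (fun w => re (star y ⬝ᵥ w)) haz
  have hαβ : α = s ^ 2 * β := by linear_combination hxz - s * hyz
  linarith [mul_nonpos_of_nonneg_of_nonpos (sq_nonneg s) hy.le]

lemma IsHermitian.posSemidef_of_re_dotProduct_mulVec_nonneg (ha : a.IsHermitian)
    (h : ∀ x, 0 ≤ re (star x ⬝ᵥ a *ᵥ x)) : a.PosSemidef :=
  .of_dotProduct_mulVec_nonneg ha fun x =>
    nonneg_iff.mpr ⟨h x, ha.im_star_dotProduct_mulVec_self x⟩

theorem IsHermitian.posSemidef_or_neg_posSemidef (ha : a.IsHermitian)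
    (hker : ∀ z, star z ⬝ᵥ a *ᵥ z = 0 → a *ᵥ z = 0) : a.PosSemidef ∨ (-a).PosSemidef := by
  by_cases hpos : ∃ x, 0 < re (star x ⬝ᵥ a *ᵥ x)
  · obtain ⟨x, hx⟩ := hpos
    exact .inl <| ha.posSemidef_of_re_dotProduct_mulVec_nonneg
      (ha.re_dotProduct_mulVec_nonneg_of_pos hker hx)
  · push Not at hpos
    refine .inr <| ha.neg.posSemidef_of_re_dotProduct_mulVec_nonneg fun x => ?_
    simpa [neg_mulVec] using hpos x

end Matrix

namespace EWitness

lemma proj_isHermitian {m : Type*} (v : m → ℂ) : (proj v).IsHermitian := by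
  rw [proj, IsHermitian, conjTranspose_vecMulVec, star_star]

section

variable {m : Type*} [Fintype m] {a : Matrix m m ℂ}

lemma proj_mulVec (v x : m → ℂ) : proj v *ᵥ x = (star v ⬝ᵥ x) • v := by
  rw [proj, vecMulVec_mulVec, op_smul_eq_smul]

lemma tinner_proj (ha : a.IsHermitian) (v : m → ℂ) :
    tinner a (proj v) = (star v ⬝ᵥ a *ᵥ v).re := by
  rw [tinner, ha.eq, proj, mul_vecMulVec, trace_vecMulVec, dotProduct_comm]

lemma tinner_smul_commutator (ha : a.IsHermitian) (z : ℂ) (q h : Matrix m m ℂ) :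
    tinner a (z • (q * h - h * q)) = ((z • (a * q - q * a)) * h).trace.re := by
  rw [tinner, ha.eq, Matrix.mul_smul, trace_smul, trace_mul_commutator, Matrix.smul_mul,
    trace_smul]

lemma commute_of_tinner_commutator_eq_zero {q : Matrix m m ℂ} (ha : a.IsHermitian)
    (hq : q.IsHermitian)
    (htangent : ∀ h : Matrix m m ℂ, h.IsHermitian → h.trace = 0 →
      tinner a (Complex.I • (q * h - h * q)) = 0) :
    Commute a q := by
  set c := Complex.I • (a * q - q * a)
  have hc : c.IsHermitian := by
    simp only [c, IsHermitian, conjTranspose_smul, conjTranspose_sub, conjTranspose_mul, ha.eq,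
      hq.eq, Complex.star_def, Complex.conj_I, neg_smul, smul_sub]
    abel
  have hc_trace : c.trace = 0 := by
    simp [c, trace_mul_comm a q]
  have hre : (cᴴ * c).trace.re = 0 := by
    rw [hc.eq, ← htangent c hc hc_trace, tinner_smul_commutator ha]
  have hnonneg := (posSemidef_conjTranspose_mul_self c).trace_nonneg
  have hzero : (cᴴ * c).trace = 0 := Complex.ext hre (Complex.nonneg_iff.mp hnonneg).2.symm
  have hc0 : c = 0 := trace_conjTranspose_mul_self_eq_zero_iff.mp hzero
  show a * q = q * a
  simpa [c, sub_eq_zero, Complex.I_ne_zero] using hc0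

lemma mulVec_eq_zero_of_commute_proj {u : m → ℂ} (hu : star u ⬝ᵥ u = 1)
    (hcomm : Commute a (proj u)) (hiso : star u ⬝ᵥ a *ᵥ u = 0) : a *ᵥ u = 0 := by
  calc a *ᵥ u = a *ᵥ (proj u *ᵥ u) := by rw [proj_mulVec, hu, one_smul]
    _ = proj u *ᵥ (a *ᵥ u) := by rw [mulVec_mulVec, hcomm.eq, ← mulVec_mulVec]
    _ = 0 := by rw [proj_mulVec, hiso, zero_smul]

lemma mulVec_eq_zero_of_isotropic
    (hcomm : ∀ u : m → ℂ, star u ⬝ᵥ u = 1 → star u ⬝ᵥ a *ᵥ u = 0 → Commute a (proj u))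
    (x : m → ℂ) (hiso : star x ⬝ᵥ a *ᵥ x = 0) : a *ᵥ x = 0 := by
  rcases eq_or_ne x 0 with rfl | hx
  · exact mulVec_zero a
  obtain ⟨c, hc, hunit⟩ := exists_smul_dotProduct_star_self_eq_one hx
  have hiso' : star (c • x) ⬝ᵥ a *ᵥ (c • x) = 0 := by
    rw [mulVec_smul, star_smul, smul_dotProduct, dotProduct_smul, hiso, smul_zero, smul_zero]
  have hacx := mulVec_eq_zero_of_commute_proj hunit (hcomm _ hunit hiso') hiso'
  rwa [mulVec_smul, smul_eq_zero, or_iff_right hc] at hacx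

end

theorem same_sign_on_pure_states_of_tangent_condition_general
    {m : Type*} [Fintype m] (a : Matrix m m ℂ) (ha : a.IsHermitian)
    (hstar : ∀ v : m → ℂ, star v ⬝ᵥ v = 1 → tinner a (proj v) = 0 →
      ∀ h : Matrix m m ℂ, h.IsHermitian → h.trace = 0 →
        tinner a (Complex.I • (proj v * h - h * proj v)) = 0) :
    (∀ v w : m → ℂ, star v ⬝ᵥ v = 1 → star w ⬝ᵥ w = 1 →
      0 ≤ tinner a (proj v) * tinner a (proj w)) ∧
    (a.PosSemidef ∨ (-a).PosSemidef) := by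
  have hker : ∀ x : m → ℂ, star x ⬝ᵥ a *ᵥ x = 0 → a *ᵥ x = 0 :=
    mulVec_eq_zero_of_isotropic fun u hu hiso =>
      commute_of_tinner_commutator_eq_zero ha (proj_isHermitian u)
        (hstar u hu (by rw [tinner_proj ha, hiso, Complex.zero_re]))
  have hsemidef := ha.posSemidef_or_neg_posSemidef hker
  refine ⟨fun v w _ _ => ?_, hsemidef⟩
  rw [tinner_proj ha, tinner_proj ha]
  rcases hsemidef with h | h
  · exact mul_nonneg (h.re_dotProduct_nonneg v) (h.re_dotProduct_nonneg w)
  · simpa [neg_mulVec] using mul_nonneg (h.re_dotProduct_nonneg v) (h.re_dotProduct_nonneg w)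

/-- Let `a` be a Hermitian operator on a finite-dimensional complex
Hilbert space such that for every rank-one orthogonal projection `q = |v⟩⟨v|` with
`Tr(a q) = 0` and every Hermitian traceless `h`, one has `Tr(a · i[q,h]) = 0`.  Then
`Tr(a p₁) · Tr(a p₂) ≥ 0` for all rank-one orthogonal projections `p₁, p₂`; equivalently,
`a` is either positive semidefinite or negative semidefinite. -/
theorem same_sign_on_pure_states_of_tangent_condition
    {m : Type*} [Fintype m] [DecidableEq m] (a : Matrix m m ℂ) (ha : a.IsHermitian)
    (hstar : ∀ v : m → ℂ, star v ⬝ᵥ v = 1 → tinner a (proj v) = 0 →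
      ∀ h : Matrix m m ℂ, h.IsHermitian → h.trace = 0 →
        tinner a (Complex.I • (proj v * h - h * proj v)) = 0) :
    (∀ v w : m → ℂ, star v ⬝ᵥ v = 1 → star w ⬝ᵥ w = 1 →
      0 ≤ tinner a (proj v) * tinner a (proj w)) ∧
    (a.PosSemidef ∨ (-a).PosSemidef) :=
  same_sign_on_pure_states_of_tangent_condition_general a ha hstar

end EWitness
end

section
/- Let H^(1),…,H^(k) be finite-dimensional complex Hilbert spaces and let a be a Hermitian operator on H^(1)⊗…⊗H^(k) satisfying condition (★): for every pure product state p with Tr(a p) = 0, the separable tangent space C(p) = {i[p,t] : t ∈ τ} is contained in I_a = {x Hermitian : Tr(x†a) = 0}. Then for all pure product states p₁, p₂, one has Tr(a p₁) · Tr(a p₂) ≥ 0. In particular, if some pure product state p₁ satisfies Tr(a p₁) > 0 then Tr(a p) ≥ 0 for all pure product states p, and hence Tr(a ϱ) ≥ 0 for all separable states ϱ. -/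
open Matrix
open scoped ComplexOrder

namespace EWitness

/-- Operators on the tensor product `H⁽¹⁾ ⊗ ⋯ ⊗ H⁽ᵏ⁾` of finite-dimensional complex
Hilbert spaces (with `dim H⁽ⁱ⁾ = n i`), modeled as matrices indexed by tuples. -/
abbrev Op {k : ℕ} (n : Fin k → ℕ) := Matrix (∀ i, Fin (n i)) (∀ i, Fin (n i)) ℂ

/-- Tensor (Kronecker) product of one operator per tensor factor. -/
def tensorOp {k : ℕ} (n : Fin k → ℕ) (A : ∀ i, Matrix (Fin (n i)) (Fin (n i)) ℂ) : Op n :=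
  Matrix.of fun x y => ∏ i, A i (x i) (y i)

/-- Tensor product of one vector per tensor factor. -/
def tensorVec {k : ℕ} (n : Fin k → ℕ) (v : ∀ i, Fin (n i) → ℂ) : (∀ i, Fin (n i)) → ℂ :=
  fun x => ∏ i, v i (x i)

/-- A state: a positive semidefinite trace-one operator. -/
noncomputable def IsState {m : Type*} [Fintype m] (ρ : Matrix m m ℂ) : Prop :=
  ρ.PosSemidef ∧ ρ.trace = 1

/-- A pure product state `⊗ᵢ |e⁽ⁱ⁾⟩⟨e⁽ⁱ⁾|` with the `e⁽ⁱ⁾` unit vectors. -/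
def IsPureProduct {k : ℕ} (n : Fin k → ℕ) (p : Op n) : Prop :=
  ∃ e : ∀ i, Fin (n i) → ℂ,
    (∀ i, star (e i) ⬝ᵥ e i = 1) ∧ p = tensorOp n fun i => proj (e i)

/-- A separable state: a finite convex combination of tensor products of states. -/
noncomputable def IsSeparable {k : ℕ} (n : Fin k → ℕ) (ϱ : Op n) : Prop :=
  ∃ (N : ℕ) (w : Fin N → ℝ) (ρ : Fin N → ∀ i, Matrix (Fin (n i)) (Fin (n i)) ℂ),
    (∀ j, 0 ≤ w j) ∧ ((∑ j, w j) = 1) ∧ (∀ j i, IsState (ρ j i)) ∧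
    ϱ = ∑ j, (w j : ℂ) • tensorOp n (ρ j)

/-- The generating set of `τ⁽ⁱ⁾`: operators `I ⊗ ⋯ ⊗ h⁽ⁱ⁾ ⊗ ⋯ ⊗ I`
with `h⁽ⁱ⁾` Hermitian and traceless. -/
def tauGen {k : ℕ} (n : Fin k → ℕ) (i : Fin k) : Set (Op n) :=
  {T | ∃ h : Matrix (Fin (n i)) (Fin (n i)) ℂ, h.IsHermitian ∧ h.trace = 0 ∧
      T = tensorOp n (Function.update (fun j => (1 : Matrix (Fin (n j)) (Fin (n j)) ℂ)) i h)}

/-- `τ⁽ⁱ⁾`: the real span of operators `I ⊗ ⋯ ⊗ h⁽ⁱ⁾ ⊗ ⋯ ⊗ I`. -/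
noncomputable def tauComp {k : ℕ} (n : Fin k → ℕ) (i : Fin k) : Submodule ℝ (Op n) :=
  Submodule.span ℝ (tauGen n i)

/-- `τ = span(⋃ᵢ τ⁽ⁱ⁾)`. -/
noncomputable def tau {k : ℕ} (n : Fin k → ℕ) : Submodule ℝ (Op n) :=
  Submodule.span ℝ (⋃ i, tauGen n i)

/-- The separable tangent space `C(p) = {i[p,t] : t ∈ τ}`. -/
def sepTangent {k : ℕ} (n : Fin k → ℕ) (p : Op n) : Set (Op n) :=
  {x | ∃ t ∈ tau n, x = Complex.I • (p * t - t * p)}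

/-- Condition (★): for every pure product state `p` orthogonal to `a`, the separable tangent
space `C(p)` is contained in the hyperplane `I_a = {x : (x,a) = 0}`. -/
def StarCond {k : ℕ} (n : Fin k → ℕ) (a : Op n) : Prop :=
  ∀ p : Op n, IsPureProduct n p → tinner a p = 0 →
    sepTangent n p ⊆ {x : Op n | tinner x a = 0}

/-- An operator is supported on a subspace `W` if it vanishes on the orthogonal
complement of `W` and its range is contained in `W`. -/
def SupportedOn {m : Type*} [Fintype m] (W : Submodule ℂ (m → ℂ)) (M : Matrix m m ℂ) : Prop :=
  (∀ v, M.mulVec v ∈ W) ∧ (∀ v, (∀ w ∈ W, star w ⬝ᵥ v = 0) → M.mulVec v = 0)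


/-!
Write `E(e) = ⟨ψ, a ψ⟩` for the product vector `ψ = e₁ ⊗ ⋯ ⊗ eₖ`. Freezing all factors but the
`j`-th, `E(e₁, …, u, …, eₖ) = ⟨u, A u⟩` for a Hermitian compression `A` of `a`. At a zero of `E`,
condition (★) applied to the generator `i(|u⟩⟨w| - |w⟩⟨u|)`, `w = A u`, forces `A u = 0`. So every
isotropic vector of `A` lies in its kernel, which makes `A` semidefinite: a sign change along a
segment would give an isotropic `z` with `A z = 0`, and the form is `t² ⟨d, A d⟩` on both sides of
`z`. Hence, where `E > 0`, replacing one factor keeps `E ≥ 0`, and tilting the new factor slightly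
towards the old one makes `E > 0` again. Replacing the factors one at a time, every unit product
vector is a limit of points where `E > 0`, so `E` does not change sign. Separable states are convex
combinations of pure product states.
-/

section QuadraticForm

variable {m : Type*} [Fintype m]

lemma star_quadForm_of_isHermitian {A : Matrix m m ℂ} (hA : A.IsHermitian) (x : m → ℂ) :
    star (star x ⬝ᵥ A *ᵥ x) = star x ⬝ᵥ A *ᵥ x := by
  rw [← star_dotProduct, star_mulVec, hA.eq, dotProduct_mulVec]

lemma ofReal_re_quadForm_of_isHermitian {A : Matrix m m ℂ} (hA : A.IsHermitian) (x : m → ℂ) :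
    ((star x ⬝ᵥ A *ᵥ x).re : ℂ) = star x ⬝ᵥ A *ᵥ x :=
  Complex.conj_eq_iff_re.mp (star_quadForm_of_isHermitian hA x)

lemma quadForm_add_smul_of_mulVec_eq_zero {A : Matrix m m ℂ} (hA : A.IsHermitian) {z : m → ℂ}
    (hz : A *ᵥ z = 0) (c : ℂ) (d : m → ℂ) :
    star (z + c • d) ⬝ᵥ A *ᵥ (z + c • d) = star c * c * (star d ⬝ᵥ A *ᵥ d) := by
  have hzd : star z ⬝ᵥ A *ᵥ d = 0 := by
    rw [dotProduct_mulVec, ← hA.eq, ← star_mulVec, hz, star_zero, zero_dotProduct]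
  simp only [star_add, star_smul, add_dotProduct, dotProduct_add, mulVec_add, mulVec_smul,
    smul_dotProduct, dotProduct_smul, smul_eq_mul, hz, hzd, dotProduct_zero]
  ring

lemma quadForm_re_nonneg_of_isotropic {A : Matrix m m ℂ} (hA : A.IsHermitian)
    (hiso : ∀ x, star x ⬝ᵥ A *ᵥ x = 0 → A *ᵥ x = 0) {y : m → ℂ}
    (hy : 0 < (star y ⬝ᵥ A *ᵥ y).re) (x : m → ℂ) : 0 ≤ (star x ⬝ᵥ A *ᵥ x).re := by
  by_contra! hx
  set d := x - y
  let φ : ℝ → ℝ := fun t => (star (y + (t : ℂ) • d) ⬝ᵥ A *ᵥ (y + (t : ℂ) • d)).re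
  have hφ : Continuous φ := by fun_prop
  obtain ⟨t, -, ht⟩ := intermediate_value_Icc' zero_le_one hφ.continuousOn
    ⟨by simpa [φ, d] using hx.le, by simpa [φ] using hy.le⟩
  set z := y + (t : ℂ) • d
  have hz : A *ᵥ z = 0 := hiso z <| by
    rw [← ofReal_re_quadForm_of_isHermitian hA]
    exact congrArg Complex.ofReal ht
  have along_d : ∀ s : ℝ, (star (z + (s : ℂ) • d) ⬝ᵥ A *ᵥ (z + (s : ℂ) • d)).re
      = s ^ 2 * (star d ⬝ᵥ A *ᵥ d).re := fun s => by
    rw [quadForm_add_smul_of_mulVec_eq_zero hA hz, Complex.star_def, Complex.conj_ofReal,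
      ← Complex.ofReal_mul, Complex.re_ofReal_mul, sq]
  have hy' := along_d (-t)
  have hx' := along_d (1 - t)
  rw [show z + ((-t : ℝ) : ℂ) • d = y by simp [z]] at hy'
  rw [show z + ((1 - t : ℝ) : ℂ) • d = x by simp [z, d, sub_smul]] at hx'
  have hd : 0 < (star d ⬝ᵥ A *ᵥ d).re := pos_of_mul_pos_right (hy' ▸ hy) (sq_nonneg _)
  nlinarith [mul_nonneg (sq_nonneg (1 - t)) hd.le]

lemma ofReal_re_dotProduct_star_self (x : m → ℂ) : ((star x ⬝ᵥ x).re : ℂ) = star x ⬝ᵥ x :=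
  Complex.ext rfl (Complex.nonneg_iff.mp (dotProduct_star_self_nonneg x)).2

lemma re_dotProduct_star_self_pos {x : m → ℂ} (hx : x ≠ 0) : 0 < (star x ⬝ᵥ x).re :=
  (Complex.pos_iff.mp (dotProduct_star_self_pos_iff.mpr hx)).1

lemma mulVec_eq_zero_of_forall_traceless {A : Matrix m m ℂ} {u : m → ℂ} (hu : star u ⬝ᵥ u = 1)
    (hq : star u ⬝ᵥ A *ᵥ u = 0)
    (htl : ∀ h : Matrix m m ℂ, h.IsHermitian → h.trace = 0 → (star (h *ᵥ u) ⬝ᵥ A *ᵥ u).im = 0) :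
    A *ᵥ u = 0 := by
  set w := A *ᵥ u
  have hwu : star w ⬝ᵥ u = 0 := by rw [star_dotProduct, hq, star_zero]
  -- the traceless Hermitian generator of the rotation of `u` towards `w`
  let h := Complex.I • (vecMulVec u (star w) - vecMulVec w (star u))
  have hh : h.IsHermitian := by
    simp only [h, IsHermitian, conjTranspose_smul, conjTranspose_sub, conjTranspose_vecMulVec,
      star_star, Complex.star_def, Complex.conj_I, neg_smul, ← smul_neg, neg_sub]
  have htr : h.trace = 0 := by
    simp [h, trace_vecMulVec, dotProduct_comm u, dotProduct_comm w, hq, hwu]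
  have hhu : h *ᵥ u = -Complex.I • w := by
    simp [h, smul_mulVec, sub_mulVec, vecMulVec_mulVec, hu, hwu]
  have hre : (star w ⬝ᵥ w).re = 0 := by
    simpa [hhu, star_smul, Complex.star_def] using htl h hh htr
  rw [← dotProduct_star_self_eq_zero, ← ofReal_re_dotProduct_star_self, hre, Complex.ofReal_zero]

lemma quadForm_real_smul (r : ℝ) (M : Matrix m m ℂ) (x : m → ℂ) :
    star (r • x) ⬝ᵥ M *ᵥ (r • x) = (r ^ 2) • (star x ⬝ᵥ M *ᵥ x) := by
  rw [star_smul, star_trivial, mulVec_smul, smul_dotProduct, dotProduct_smul, smul_smul, sq]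

/-- Rescaling to a unit vector for the norm `√(x† x)`; junk value `0` at `x = 0`. -/
noncomputable def unitize (x : m → ℂ) : m → ℂ := (√(star x ⬝ᵥ x).re)⁻¹ • x

lemma quadForm_unitize (M : Matrix m m ℂ) (x : m → ℂ) :
    star (unitize x) ⬝ᵥ M *ᵥ unitize x = ((star x ⬝ᵥ x).re)⁻¹ • (star x ⬝ᵥ M *ᵥ x) := by
  rw [unitize, quadForm_real_smul, inv_pow,
    Real.sq_sqrt (Complex.nonneg_iff.mp (dotProduct_star_self_nonneg x)).1]

lemma star_unitize_dotProduct_self {x : m → ℂ} (hx : x ≠ 0) :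
    star (unitize x) ⬝ᵥ unitize x = 1 := by
  classical
  have h := quadForm_unitize 1 x
  simp only [one_mulVec] at h
  rw [h, Complex.real_smul]
  nth_rw 2 [← ofReal_re_dotProduct_star_self x]
  rw [← Complex.ofReal_mul, inv_mul_cancel₀ (re_dotProduct_star_self_pos hx).ne', Complex.ofReal_one]

lemma unitize_eq_self {x : m → ℂ} (hx : star x ⬝ᵥ x = 1) : unitize x = x := by
  simp [unitize, hx]

lemma continuousAt_unitize {x : m → ℂ} (hx : x ≠ 0) : ContinuousAt unitize x := by
  have hc : Continuous fun x : m → ℂ => √(star x ⬝ᵥ x).re := by fun_prop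
  exact (hc.continuousAt.inv₀ (Real.sqrt_pos.mpr (re_dotProduct_star_self_pos hx)).ne').smul
    continuousAt_id

end QuadraticForm

section TraceInner

variable {m : Type*} [Fintype m]

lemma tinner_neg_left (a b : Matrix m m ℂ) : tinner (-a) b = -tinner a b := by
  simp [tinner]

lemma tinner_sum_right {ι : Type*} (a : Matrix m m ℂ) (s : Finset ι) (f : ι → Matrix m m ℂ) :
    tinner a (∑ i ∈ s, f i) = ∑ i ∈ s, tinner a (f i) := by
  simp [tinner, Finset.mul_sum, trace_sum]

lemma tinner_real_smul_right (a : Matrix m m ℂ) (r : ℝ) (b : Matrix m m ℂ) :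
    tinner a ((r : ℂ) • b) = r * tinner a b := by
  simp [tinner]

lemma tinner_smul_I_commutator {p T a : Matrix m m ℂ} (hp : p.IsHermitian) (hT : T.IsHermitian)
    (ha : a.IsHermitian) :
    tinner (Complex.I • (p * T - T * p)) a = -2 * (p * T * a).trace.im := by
  have hx : (Complex.I • (p * T - T * p))ᴴ = Complex.I • (p * T - T * p) := by
    simp only [conjTranspose_smul, conjTranspose_sub, conjTranspose_mul, hp.eq, hT.eq,
      Complex.star_def, Complex.conj_I, neg_smul, ← smul_neg, neg_sub]
  have hswap : (T * p * a).trace = star (p * T * a).trace := by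
    rw [← trace_conjTranspose, conjTranspose_mul, conjTranspose_mul, hp.eq, hT.eq, ha.eq,
      trace_mul_cycle, Matrix.mul_assoc]
  rw [tinner, hx, smul_mul, sub_mul, trace_smul, trace_sub, hswap]
  simp [Complex.mul_re]
  ring

lemma trace_proj_mul (v : m → ℂ) (M : Matrix m m ℂ) : (proj v * M).trace = star v ⬝ᵥ M *ᵥ v := by
  rw [proj, vecMulVec_mul, trace_vecMulVec, dotProduct_comm, dotProduct_mulVec]

end TraceInner

section Tensor

variable {k : ℕ} {n : Fin k → ℕ}

def IsUnitFamily (e : ∀ i, Fin (n i) → ℂ) : Prop := ∀ i, star (e i) ⬝ᵥ e i = 1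

lemma IsUnitFamily.update {e : ∀ i, Fin (n i) → ℂ} (he : IsUnitFamily e) (j : Fin k)
    {u : Fin (n j) → ℂ} (hu : star u ⬝ᵥ u = 1) : IsUnitFamily (Function.update e j u) := by
  intro i
  rcases eq_or_ne i j with rfl | hij
  · simpa using hu
  · simpa [hij] using he i

lemma tensorOp_isHermitian {A : ∀ i, Matrix (Fin (n i)) (Fin (n i)) ℂ}
    (hA : ∀ i, (A i).IsHermitian) : (tensorOp n A).IsHermitian := by
  ext x y
  simp only [conjTranspose_apply, tensorOp, of_apply, star_prod]
  exact Finset.prod_congr rfl fun i _ => (hA i).apply (x i) (y i)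

lemma tensorOp_mulVec (A : ∀ i, Matrix (Fin (n i)) (Fin (n i)) ℂ) (v : ∀ i, Fin (n i) → ℂ) :
    tensorOp n A *ᵥ tensorVec n v = tensorVec n fun i => A i *ᵥ v i := by
  ext x
  simp only [mulVec, dotProduct, tensorOp, tensorVec, of_apply, Finset.prod_univ_sum,
    Fintype.piFinset_univ, Finset.prod_mul_distrib]

lemma tensorOp_proj (e : ∀ i, Fin (n i) → ℂ) :
    tensorOp n (fun i => proj (e i)) = proj (tensorVec n e) := by
  ext x y
  simp [tensorOp, proj, vecMulVec_apply, tensorVec, Finset.prod_mul_distrib, star_prod]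

lemma tensorVec_update_apply (e : ∀ i, Fin (n i) → ℂ) (j : Fin k) (u : Fin (n j) → ℂ)
    (x : ∀ i, Fin (n i)) :
    tensorVec n (Function.update e j u) x = u (x j) * ∏ i ∈ Finset.univ \ {j}, e i (x i) := by
  simp only [tensorVec, Function.apply_update (fun i (v : Fin (n i) → ℂ) => v (x i)),
    Finset.prod_update_of_mem (Finset.mem_univ j)]

/-- The embedding `u ↦ e₁ ⊗ ⋯ ⊗ u ⊗ ⋯ ⊗ eₖ` of the `j`-th factor, as a matrix. -/
def slotEmbed (e : ∀ i, Fin (n i) → ℂ) (j : Fin k) : Matrix (∀ i, Fin (n i)) (Fin (n j)) ℂ :=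
  of fun x s => tensorVec n (Function.update e j (Pi.single s 1)) x

lemma slotEmbed_mulVec (e : ∀ i, Fin (n i) → ℂ) (j : Fin k) (u : Fin (n j) → ℂ) :
    slotEmbed e j *ᵥ u = tensorVec n (Function.update e j u) := by
  ext x
  simp [slotEmbed, mulVec, dotProduct, tensorVec_update_apply, Pi.single_apply, mul_comm]

lemma slotEmbed_update (e : ∀ i, Fin (n i) → ℂ) (j : Fin k) (u : Fin (n j) → ℂ) :
    slotEmbed (Function.update e j u) j = slotEmbed e j := by
  simp [slotEmbed]

noncomputable def expect (a : Op n) (e : ∀ i, Fin (n i) → ℂ) : ℝ :=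
  (star (tensorVec n e) ⬝ᵥ a *ᵥ tensorVec n e).re

noncomputable def slotOp (a : Op n) (e : ∀ i, Fin (n i) → ℂ) (j : Fin k) :
    Matrix (Fin (n j)) (Fin (n j)) ℂ :=
  (slotEmbed e j)ᴴ * a * slotEmbed e j

lemma quadForm_slotOp (a : Op n) (e : ∀ i, Fin (n i) → ℂ) (j : Fin k) (u v : Fin (n j) → ℂ) :
    star u ⬝ᵥ slotOp a e j *ᵥ v
      = star (tensorVec n (Function.update e j u)) ⬝ᵥ a *ᵥ tensorVec n (Function.update e j v) := by
  rw [slotOp, ← mulVec_mulVec, ← mulVec_mulVec, dotProduct_mulVec, ← star_mulVec,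
    slotEmbed_mulVec, slotEmbed_mulVec]

lemma slotOp_update (a : Op n) (e : ∀ i, Fin (n i) → ℂ) (j : Fin k) (u : Fin (n j) → ℂ) :
    slotOp a (Function.update e j u) j = slotOp a e j := by
  rw [slotOp, slotOp, slotEmbed_update]

lemma slotOp_isHermitian {a : Op n} (ha : a.IsHermitian) (e : ∀ i, Fin (n i) → ℂ) (j : Fin k) :
    (slotOp a e j).IsHermitian :=
  isHermitian_conjTranspose_mul_mul _ ha

lemma expect_update (a : Op n) (e : ∀ i, Fin (n i) → ℂ) (j : Fin k) (u : Fin (n j) → ℂ) :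
    expect a (Function.update e j u) = (star u ⬝ᵥ slotOp a e j *ᵥ u).re := by
  rw [expect, quadForm_slotOp]

lemma expect_eq_re_quadForm_slotOp (a : Op n) (e : ∀ i, Fin (n i) → ℂ) (j : Fin k) :
    expect a e = (star (e j) ⬝ᵥ slotOp a e j *ᵥ e j).re := by
  rw [← expect_update, Function.update_eq_self]

lemma expect_neg (a : Op n) (e : ∀ i, Fin (n i) → ℂ) : expect (-a) e = -expect a e := by
  simp [expect, neg_mulVec]

lemma continuous_expect (a : Op n) : Continuous (expect a) := by
  unfold expect tensorVec
  fun_prop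

lemma tinner_tensorOp_proj {a : Op n} (ha : a.IsHermitian) (e : ∀ i, Fin (n i) → ℂ) :
    tinner a (tensorOp n fun i => proj (e i)) = expect a e := by
  rw [tinner, ha.eq, tensorOp_proj, trace_mul_comm, trace_proj_mul, expect]

end Tensor

section StarCond

open Filter Topology

variable {k : ℕ} {n : Fin k → ℕ} {a : Op n}

lemma starCond_neg (hstar : StarCond n a) : StarCond n (-a) := by
  intro p hp h0 x hx
  simpa [tinner] using hstar p hp (by simpa [tinner_neg_left] using h0) hx

lemma im_quadForm_slotOp_eq_zero (ha : a.IsHermitian) (hstar : StarCond n a)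
    {e : ∀ i, Fin (n i) → ℂ} (he : IsUnitFamily e) (h0 : expect a e = 0) (j : Fin k)
    {h : Matrix (Fin (n j)) (Fin (n j)) ℂ} (hh : h.IsHermitian) (htr : h.trace = 0) :
    (star (h *ᵥ e j) ⬝ᵥ slotOp a e j *ᵥ e j).im = 0 := by
  set T := tensorOp n (Function.update (fun i => (1 : Matrix (Fin (n i)) (Fin (n i)) ℂ)) j h)
  set p := tensorOp n fun i => proj (e i)
  have hpψ : p = proj (tensorVec n e) := tensorOp_proj e
  have hT : T.IsHermitian := tensorOp_isHermitian fun i => by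
    rcases eq_or_ne i j with rfl | hij
    · simpa using hh
    · simp [hij, isHermitian_one]
  have hp : p.IsHermitian := tensorOp_isHermitian fun i => proj_isHermitian _
  have hTτ : T ∈ tau n := Submodule.subset_span (Set.mem_iUnion.mpr ⟨j, h, hh, htr, rfl⟩)
  have hcomm := hstar p ⟨e, he, rfl⟩ (by rw [tinner_tensorOp_proj ha, h0]) ⟨T, hTτ, rfl⟩
  rw [Set.mem_ofPred_eq, tinner_smul_I_commutator hp hT ha] at hcomm
  have hTψ : T *ᵥ tensorVec n e = tensorVec n (Function.update e j (h *ᵥ e j)) := by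
    rw [tensorOp_mulVec]
    congr 1
    funext i
    rcases eq_or_ne i j with rfl | hij
    · simp
    · simp [hij]
  have htrace : (p * T * a).trace = star (h *ᵥ e j) ⬝ᵥ slotOp a e j *ᵥ e j := by
    rw [hpψ, Matrix.mul_assoc, trace_proj_mul, ← mulVec_mulVec, dotProduct_mulVec,
      ← hT.eq, ← star_mulVec, hTψ, quadForm_slotOp, Function.update_eq_self]
  linarith [htrace ▸ hcomm]

lemma slotOp_mulVec_self_eq_zero (ha : a.IsHermitian) (hstar : StarCond n a)
    {e : ∀ i, Fin (n i) → ℂ} (he : IsUnitFamily e) (h0 : expect a e = 0) (j : Fin k) :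
    slotOp a e j *ᵥ e j = 0 :=
  mulVec_eq_zero_of_forall_traceless (he j)
    (by rw [← ofReal_re_quadForm_of_isHermitian (slotOp_isHermitian ha e j),
      ← expect_eq_re_quadForm_slotOp, h0, Complex.ofReal_zero])
    fun _ hh htr => im_quadForm_slotOp_eq_zero ha hstar he h0 j hh htr

lemma slotOp_mulVec_eq_zero_of_isotropic (ha : a.IsHermitian) (hstar : StarCond n a)
    {e : ∀ i, Fin (n i) → ℂ} (he : IsUnitFamily e) (j : Fin k) {x : Fin (n j) → ℂ}
    (hx : star x ⬝ᵥ slotOp a e j *ᵥ x = 0) : slotOp a e j *ᵥ x = 0 := by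
  rcases eq_or_ne x 0 with rfl | hx0
  · exact mulVec_zero _
  have h0 : expect a (Function.update e j (unitize x)) = 0 := by
    rw [expect_update, quadForm_unitize, hx, smul_zero, Complex.zero_re]
  have hker := slotOp_mulVec_self_eq_zero ha hstar
    (he.update j (star_unitize_dotProduct_self hx0)) h0 j
  rw [slotOp_update, Function.update_self, unitize, mulVec_smul, smul_eq_zero] at hker
  exact hker.resolve_left (inv_ne_zero (Real.sqrt_pos.mpr (re_dotProduct_star_self_pos hx0)).ne')

lemma re_quadForm_slotOp_nonneg (ha : a.IsHermitian) (hstar : StarCond n a)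
    {e : ∀ i, Fin (n i) → ℂ} (he : IsUnitFamily e) (hpos : 0 < expect a e) (j : Fin k)
    (x : Fin (n j) → ℂ) : 0 ≤ (star x ⬝ᵥ slotOp a e j *ᵥ x).re :=
  quadForm_re_nonneg_of_isotropic (slotOp_isHermitian ha e j)
    (fun _ hx => slotOp_mulVec_eq_zero_of_isotropic ha hstar he j hx)
    (by rwa [← expect_eq_re_quadForm_slotOp]) x

def positiveFamilies (a : Op n) : Set (∀ i, Fin (n i) → ℂ) :=
  {e | IsUnitFamily e ∧ 0 < expect a e}

lemma update_mem_closure_positiveFamilies_of_mem (ha : a.IsHermitian) (hstar : StarCond n a)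
    {e : ∀ i, Fin (n i) → ℂ} (he : e ∈ positiveFamilies a) (j : Fin k) {u : Fin (n j) → ℂ}
    (hu : star u ⬝ᵥ u = 1) : Function.update e j u ∈ closure (positiveFamilies a) := by
  set A := slotOp a e j
  have hA : A.IsHermitian := slotOp_isHermitian ha e j
  rcases (re_quadForm_slotOp_nonneg ha hstar he.1 he.2 j u).lt_or_eq with hpos | hzero
  · exact subset_closure ⟨he.1.update j hu, by rwa [expect_update]⟩
  have hAu : A *ᵥ u = 0 := slotOp_mulVec_eq_zero_of_isotropic ha hstar he.1 j
    (by rw [← ofReal_re_quadForm_of_isHermitian hA, ← hzero, Complex.ofReal_zero])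
  -- since `A u = 0`, the form sees only the tilt towards `e j`
  let x : ℝ → Fin (n j) → ℂ := fun δ => u + (δ : ℂ) • e j
  have hx : ∀ δ, (star (x δ) ⬝ᵥ A *ᵥ x δ).re = δ ^ 2 * expect a e := fun δ => by
    rw [quadForm_add_smul_of_mulVec_eq_zero hA hAu, Complex.star_def, Complex.conj_ofReal,
      ← Complex.ofReal_mul, Complex.re_ofReal_mul, expect_eq_re_quadForm_slotOp a e j, sq]
  have hu0 : u ≠ 0 := fun h => by simp [h] at hu
  have hlim : Tendsto (fun δ => Function.update e j (unitize (x δ))) (𝓝[≠] 0)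
      (𝓝 (Function.update e j u)) := by
    have hcont : ContinuousAt (fun δ => Function.update e j (unitize (x δ))) 0 := by
      have hx0 : x 0 = u := by simp [x]
      have : ContinuousAt (fun δ => unitize (x δ)) 0 :=
        (continuousAt_unitize hu0).comp_of_eq (show Continuous x by fun_prop).continuousAt hx0
      exact (continuous_const.update j continuous_id).continuousAt.comp this
    simpa [x, unitize_eq_self hu] using hcont.tendsto.mono_left nhdsWithin_le_nhds
  refine mem_closure_of_tendsto hlim (eventually_nhdsWithin_of_forall fun δ (hδ : δ ≠ 0) => ?_)
  have hqpos : 0 < (star (x δ) ⬝ᵥ A *ᵥ x δ).re := hx δ ▸ mul_pos (by positivity) he.2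
  have hxne : x δ ≠ 0 := fun h => by simp [h] at hqpos
  refine ⟨he.1.update j (star_unitize_dotProduct_self hxne), ?_⟩
  rw [expect_update, quadForm_unitize, Complex.smul_re]
  exact mul_pos (inv_pos.mpr (re_dotProduct_star_self_pos hxne)) hqpos

lemma update_mem_closure_positiveFamilies (ha : a.IsHermitian) (hstar : StarCond n a)
    {e : ∀ i, Fin (n i) → ℂ} (he : e ∈ closure (positiveFamilies a)) (j : Fin k)
    {u : Fin (n j) → ℂ} (hu : star u ⬝ᵥ u = 1) :
    Function.update e j u ∈ closure (positiveFamilies a) :=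
  closure_closure (s := positiveFamilies a) ▸
    map_mem_closure (f := fun w => Function.update w j u) (by fun_prop) he
      fun _ hw => update_mem_closure_positiveFamilies_of_mem ha hstar hw j hu

/-- Replacing the factors of `e` by those of `f` one at a time never leaves the closure. -/
lemma mem_closure_positiveFamilies (ha : a.IsHermitian) (hstar : StarCond n a)
    {e : ∀ i, Fin (n i) → ℂ} (he : e ∈ positiveFamilies a) {f : ∀ i, Fin (n i) → ℂ}
    (hf : IsUnitFamily f) : f ∈ closure (positiveFamilies a) := by
  classical
  suffices ∀ s : Finset (Fin k), s.piecewise f e ∈ closure (positiveFamilies a) by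
    simpa using this Finset.univ
  intro s
  induction s using Finset.induction_on with
  | empty => simpa using subset_closure he
  | insert j s _ ih =>
    rw [Finset.piecewise_insert]
    exact update_mem_closure_positiveFamilies ha hstar ih j (hf j)

lemma expect_nonneg_of_pos (ha : a.IsHermitian) (hstar : StarCond n a)
    {e f : ∀ i, Fin (n i) → ℂ} (he : IsUnitFamily e) (hpos : 0 < expect a e)
    (hf : IsUnitFamily f) : 0 ≤ expect a f :=
  (isClosed_le continuous_const (continuous_expect a)).closure_subset_iff.mpr
    (fun _ hw => hw.2.le) (mem_closure_positiveFamilies ha hstar ⟨he, hpos⟩ hf)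

lemma expect_mul_nonneg (ha : a.IsHermitian) (hstar : StarCond n a)
    {e f : ∀ i, Fin (n i) → ℂ} (he : IsUnitFamily e) (hf : IsUnitFamily f) :
    0 ≤ expect a e * expect a f := by
  rcases lt_trichotomy (expect a e) 0 with hneg | hzero | hpos
  · have := expect_nonneg_of_pos ha.neg (starCond_neg hstar) he
      (by rwa [expect_neg, neg_pos]) hf
    rw [expect_neg, neg_nonneg] at this
    exact mul_nonneg_of_nonpos_of_nonpos hneg.le this
  · simp [hzero]
  · exact mul_nonneg hpos.le (expect_nonneg_of_pos ha hstar he hpos hf)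

end StarCond

section Separable

lemma exists_eq_sum_proj_of_posSemidef {m : Type*} [Fintype m] [DecidableEq m]
    {ρ : Matrix m m ℂ} (hρ : ρ.PosSemidef) :
    ∃ (c : m → ℝ) (v : m → m → ℂ), (∀ t, 0 ≤ c t) ∧ (∀ t, star (v t) ⬝ᵥ v t = 1) ∧
      ρ = ∑ t, (c t : ℂ) • proj (v t) := by
  set U : Matrix m m ℂ := (hρ.1.eigenvectorUnitary : Matrix m m ℂ)
  refine ⟨hρ.1.eigenvalues, fun t x => U x t, hρ.eigenvalues_nonneg, fun t => ?_, ?_⟩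
  · have := congr_fun (congr_fun (Unitary.coe_star_mul_self hρ.1.eigenvectorUnitary) t) t
    simpa [mul_apply, dotProduct, U] using this
  · conv_lhs => rw [hρ.1.spectral_theorem, Unitary.conjStarAlgAut_apply]
    ext x y
    rw [mul_apply]
    simp only [mul_diagonal, Matrix.sum_apply, Matrix.smul_apply, proj, vecMulVec_apply,
      Function.comp_apply, U, smul_eq_mul, Pi.star_apply]
    exact Finset.sum_congr rfl fun _ _ => by
      simp only [IsHermitian.eigenvectorUnitary_apply, Complex.coe_algebraMap, star_apply,
        RCLike.star_def]
      ring

lemma tensorOp_sum_smul {k : ℕ} {n : Fin k → ℕ} {ι : Fin k → Type*} [∀ i, Fintype (ι i)]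
    (c : ∀ i, ι i → ℝ) (P : ∀ i, ι i → Matrix (Fin (n i)) (Fin (n i)) ℂ) :
    tensorOp n (fun i => ∑ t, (c i t : ℂ) • P i t)
      = ∑ χ : ∀ i, ι i, ((∏ i, c i (χ i) : ℝ) : ℂ) • tensorOp n fun i => P i (χ i) := by
  ext x y
  simp only [tensorOp, of_apply, Matrix.sum_apply, Matrix.smul_apply, smul_eq_mul,
    Finset.prod_univ_sum, Fintype.piFinset_univ, Finset.prod_mul_distrib, Complex.ofReal_prod]

variable {k : ℕ} {n : Fin k → ℕ} {a : Op n}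

lemma tinner_tensorOp_nonneg (hpure : ∀ p, IsPureProduct n p → 0 ≤ tinner a p)
    {ρ : ∀ i, Matrix (Fin (n i)) (Fin (n i)) ℂ} (hρ : ∀ i, (ρ i).PosSemidef) :
    0 ≤ tinner a (tensorOp n ρ) := by
  choose c v hc hv hρv using fun i => exists_eq_sum_proj_of_posSemidef (hρ i)
  rw [funext hρv, tensorOp_sum_smul, tinner_sum_right]
  refine Finset.sum_nonneg fun χ _ => ?_
  rw [tinner_real_smul_right]
  exact mul_nonneg (Finset.prod_nonneg fun i _ => hc i (χ i))
    (hpure _ ⟨fun i => v i (χ i), fun i => hv i (χ i), rfl⟩)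

lemma tinner_nonneg_of_isSeparable (hpure : ∀ p, IsPureProduct n p → 0 ≤ tinner a p)
    {ϱ : Op n} (hϱ : IsSeparable n ϱ) : 0 ≤ tinner a ϱ := by
  obtain ⟨N, w, ρ, hw, -, hρ, rfl⟩ := hϱ
  rw [tinner_sum_right]
  refine Finset.sum_nonneg fun j _ => ?_
  rw [tinner_real_smul_right]
  exact mul_nonneg (hw j) (tinner_tensorOp_nonneg hpure fun i => (hρ j i).1)

end Separable

/-- sufficiency.  If a Hermitian operator `a` on `H⁽¹⁾ ⊗ ⋯ ⊗ H⁽ᵏ⁾`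
satisfies condition (★), then `Tr(a p₁) · Tr(a p₂) ≥ 0` for all pure product states
`p₁, p₂`; in particular, if `Tr(a p₁) > 0` for some pure product state then
`Tr(a p) ≥ 0` for all pure product states `p`, and hence `Tr(a ϱ) ≥ 0` for all separable
states `ϱ`. -/
theorem nonneg_on_separables_of_starCond {k : ℕ} (n : Fin k → ℕ)
    (a : Op n) (ha : a.IsHermitian) (hstar : StarCond n a) :
    (∀ p₁ p₂ : Op n, IsPureProduct n p₁ → IsPureProduct n p₂ →
      0 ≤ tinner a p₁ * tinner a p₂) ∧
    ((∃ p₁ : Op n, IsPureProduct n p₁ ∧ 0 < tinner a p₁) →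
      (∀ p : Op n, IsPureProduct n p → 0 ≤ tinner a p) ∧
      (∀ ϱ : Op n, IsSeparable n ϱ → 0 ≤ tinner a ϱ)) := by
  have hprod : ∀ p₁ p₂ : Op n, IsPureProduct n p₁ → IsPureProduct n p₂ →
      0 ≤ tinner a p₁ * tinner a p₂ := by
    rintro _ _ ⟨e, he, rfl⟩ ⟨f, hf, rfl⟩
    rw [tinner_tensorOp_proj ha, tinner_tensorOp_proj ha]
    exact expect_mul_nonneg ha hstar he hf
  refine ⟨hprod, fun ⟨p₁, hp₁, hpos⟩ => ?_⟩
  have hpure : ∀ p, IsPureProduct n p → 0 ≤ tinner a p :=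
    fun p hp => nonneg_of_mul_nonneg_right (hprod p₁ p hp₁ hp) hpos
  exact ⟨hpure, fun ϱ => tinner_nonneg_of_isSeparable hpure⟩

end EWitness
end
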